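/- arXiv:2403.17110 — 4 statements merged into one kernel-verified Lean document; each statement's English description precedes it below -/
import Mathlib

section
/- The number of parking functions of length n is (n+1)^(n-1). -/
/-- A parking function of length `n`: a sequence of positive integers whose weakly
increasing rearrangement `λ` (obtained via a permutation `σ`) satisfies `λ i ≤ i`
(1-indexed). -/
def IsParkingFunction (n : ℕ) (π : Fin n → ℕ) : Prop :=
  (∀ i, 1 ≤ π i) ∧ ∃ σ : Equiv.Perm (Fin n),
    Monotone (π ∘ σ) ∧ ∀ i : Fin n, π (σ i) ≤ (i : ℕ) + 1

/-!
Pollak's circular argument. Encode a preference `v : ZMod (n + 1)` as the spot `v.val + 1` on a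
circle of `n + 1` spots, and let `S j` be the number of cars preferring one of the first `j` spots
(counted around the circle) minus `j`. Then `f` is a parking function iff `S` stays `≥ S 0` on
`[0, n]`, while one full turn lowers `S` by exactly one. Such a walk has exactly one starting
point in each period from which it stays at or above its start for a full turn, so exactly one of the
`n + 1` rotations `c +ᵥ f` is a parking function, and there are `(n + 1) ^ n / (n + 1)` of them.
-/

open Finset

theorem existsUnique_isMinOn_Ico_of_add_eq_sub_one {m : ℕ} (hm : 0 < m) {S : ℕ → ℤ}
    (hS : ∀ j, S (j + m) = S j - 1) :
    ∃! a, a < m ∧ IsMinOn S (Set.Ico a (a + m)) a := by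
  classical
  have hex : ∃ a, a < m ∧ ∀ b < m, S a ≤ S b := by
    obtain ⟨a, ha, hmin⟩ := exists_min_image (range m) S ⟨0, mem_range.2 hm⟩
    exact ⟨a, mem_range.1 ha, fun b hb => hmin b (mem_range.2 hb)⟩
  obtain ⟨ha, hmin⟩ := Nat.find_spec hex
  -- Taking the first minimiser on `[0, m)` makes `S` strictly larger before it, hence, after
  -- subtracting one, still no smaller on `[m, a + m)`.
  have hlt : ∀ i < Nat.find hex, S (Nat.find hex) < S i := by
    intro i hi
    obtain ⟨b, hb, hbi⟩ : ∃ b < m, S b < S i := by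
      simpa [hi.trans ha] using Nat.find_min hex hi
    exact (hmin b hb).trans_lt hbi
  have not_both : ∀ a b, a < b → b < m → IsMinOn S (Set.Ico a (a + m)) a →
      ¬ IsMinOn S (Set.Ico b (b + m)) b := by
    intro a b hab hbm ha hb
    have h1 := isMinOn_iff.1 ha b (by simp; omega)
    have h2 := isMinOn_iff.1 hb (a + m) (by simp; omega)
    rw [hS] at h2
    omega
  have hfind : IsMinOn S (Set.Ico (Nat.find hex) (Nat.find hex + m)) (Nat.find hex) := by
    refine isMinOn_iff.2 fun j hj => ?_
    rw [Set.mem_Ico] at hj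
    by_cases hjm : j < m
    · exact hmin j hjm
    · obtain ⟨i, rfl⟩ : ∃ i, j = i + m := ⟨j - m, by omega⟩
      have := hlt i (by omega)
      rw [hS]
      omega
  refine ⟨Nat.find hex, ⟨ha, hfind⟩, fun b ⟨hb, hbmin⟩ => ?_⟩
  rcases lt_trichotomy b (Nat.find hex) with h | h | h
  · exact absurd hfind (not_both _ _ h ha hbmin)
  · exact h
  · exact absurd hbmin (not_both _ _ h hb hfind)

theorem Nat.card_mul_card_eq_of_existsUnique_vadd_mem {G X : Type*} [AddGroup G]
    [AddAction G X] {P : Set X} (h : ∀ x, ∃! g : G, g +ᵥ x ∈ P) :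
    Nat.card P * Nat.card G = Nat.card X := by
  choose g hg hg_unique using h
  let e : P × G ≃ X :=
    { toFun := fun p => p.2 +ᵥ (p.1 : X)
      invFun := fun x => (⟨g x +ᵥ x, hg x⟩, -g x)
      left_inv := by
        rintro ⟨⟨x, hx⟩, c⟩
        have : g (c +ᵥ x) = -c := (hg_unique _ (-c) (by simpa [vadd_vadd] using hx)).symm
        ext <;> simp [this, vadd_vadd]
      right_inv := fun x => by simp [vadd_vadd] }
  rw [← Nat.card_prod, Nat.card_congr e]

theorem monotone_le_succ_iff_le_card {n : ℕ} {μ : Fin n → ℕ} (hμ : Monotone μ) :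
    (∀ i : Fin n, μ i ≤ i + 1) ↔ ∀ k ≤ n, k ≤ #{i | μ i ≤ k} := by
  constructor
  · intro h k hk
    calc k = #{i : Fin n | (i : ℕ) < k} := by rw [Fin.card_filter_val_lt]; omega
      _ ≤ #{i | μ i ≤ k} := card_le_card fun i => by simpa using fun hi => (h i).trans hi
  · intro h i
    by_contra! hi
    have hsub : ({j | μ j ≤ i + 1} : Finset (Fin n)) ⊆ ({j | (j : ℕ) < i} : Finset (Fin n)) := by
      intro j
      simp only [mem_filter, mem_univ, true_and]
      intro hj
      by_contra! hij
      have := hμ (Fin.le_def.2 hij)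
      omega
    have := (h (i + 1) i.isLt).trans (card_le_card hsub)
    rw [Fin.card_filter_val_lt] at this
    omega

theorem isParkingFunction_iff_le_card {n : ℕ} {π : Fin n → ℕ} :
    IsParkingFunction n π ↔ (∀ i, 1 ≤ π i) ∧ ∀ k ≤ n, k ≤ #{i | π i ≤ k} := by
  have hperm : ∀ (σ : Equiv.Perm (Fin n)) k, #{i | π (σ i) ≤ k} = #{i | π i ≤ k} :=
    fun σ k => card_equiv σ (by simp)
  refine and_congr_right fun _ => ⟨?_, fun h => ?_⟩
  · rintro ⟨σ, hmono, hle⟩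
    simpa [hperm] using (monotone_le_succ_iff_le_card hmono).1 hle
  · refine ⟨Tuple.sort π, Tuple.monotone_sort π, ?_⟩
    exact (monotone_le_succ_iff_le_card (Tuple.monotone_sort π)).2 (by simpa [hperm] using h)

theorem IsParkingFunction.le {n : ℕ} {π : Fin n → ℕ} (hπ : IsParkingFunction n π) (i : Fin n) :
    π i ≤ n := by
  obtain ⟨-, σ, -, hle⟩ := hπ
  simpa using (hle (σ.symm i)).trans (σ.symm i).isLt

section Circular

variable {n : ℕ}

def prefixExcess (f : Fin n → ZMod (n + 1)) (j : ℕ) : ℤ :=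
  ∑ r ∈ range j, (#{i | f i = r} : ℤ) - j

theorem card_val_lt_eq_sum (f : Fin n → ZMod (n + 1)) {k : ℕ} (hk : k ≤ n + 1) :
    #{i | (f i).val < k} = ∑ r ∈ range k, #{i | f i = r} := by
  rw [card_eq_sum_card_fiberwise (f := fun i => (f i).val) (t := range k) (fun i => by simp)]
  refine sum_congr rfl fun r hr => congrArg card (ext fun i => ?_)
  simp only [mem_filter, mem_univ, true_and]
  constructor
  · rintro ⟨-, h⟩
    rw [← h, ZMod.natCast_zmod_val]
  · rintro h
    rw [h, ZMod.val_cast_of_lt (by simp at hr; omega)]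
    simpa using hr

theorem prefixExcess_add_period (f : Fin n → ZMod (n + 1)) (j : ℕ) :
    prefixExcess f (j + (n + 1)) = prefixExcess f j - 1 := by
  have htotal : ∑ r ∈ range (n + 1), (#{i | f i = r} : ℤ) = n := by
    rw [← Nat.cast_sum, ← card_val_lt_eq_sum f le_rfl,
      filter_true_of_mem fun i _ => ZMod.val_lt (f i), card_univ, Fintype.card_fin]
  have hperiod : ∀ r : ℕ, ((n + 1 + r : ℕ) : ZMod (n + 1)) = r := by simp
  unfold prefixExcess
  rw [add_comm j, sum_range_add, htotal]
  simp only [hperiod]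
  push_cast
  ring

theorem prefixExcess_vadd (f : Fin n → ZMod (n + 1)) (c : ZMod (n + 1)) (j : ℕ) :
    prefixExcess (c +ᵥ f) j = prefixExcess f ((-c).val + j) - prefixExcess f (-c).val := by
  have hshift : ∀ r : ℕ, #{i | (c +ᵥ f) i = r} = #{i | f i = ((-c).val + r : ℕ)} := by
    intro r
    congr 1
    ext i
    simp only [mem_filter, mem_univ, true_and, Nat.cast_add, ZMod.natCast_val, ZMod.cast_id',
      id, eq_neg_add_iff_add_eq]
    rfl
  unfold prefixExcess
  simp only [hshift, sum_range_add]
  push_cast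
  ring

theorem isParkingFunction_val_add_one_iff (g : Fin n → ZMod (n + 1)) :
    IsParkingFunction n (fun i => (g i).val + 1) ↔ ∀ j ≤ n, 0 ≤ prefixExcess g j := by
  rw [isParkingFunction_iff_le_card]
  simp only [le_add_iff_nonneg_left, zero_le, implies_true, true_and, Nat.add_one_le_iff]
  refine forall₂_congr fun k hk => ?_
  rw [card_val_lt_eq_sum g (by omega), prefixExcess, sub_nonneg, ← Nat.cast_sum, Nat.cast_le]

theorem existsUnique_isParkingFunction_vadd (f : Fin n → ZMod (n + 1)) :
    ∃! c : ZMod (n + 1), IsParkingFunction n (fun i => ((c +ᵥ f) i).val + 1) := by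
  have key : ∀ c : ZMod (n + 1), IsParkingFunction n (fun i => ((c +ᵥ f) i).val + 1) ↔
      IsMinOn (prefixExcess f) (Set.Ico (-c).val ((-c).val + (n + 1))) (-c).val := by
    intro c
    rw [isParkingFunction_val_add_one_iff, isMinOn_iff]
    constructor
    · intro h j hj
      rw [Set.mem_Ico] at hj
      obtain ⟨d, rfl⟩ : ∃ d, j = (-c).val + d := ⟨j - (-c).val, by omega⟩
      have := h d (by omega)
      rw [prefixExcess_vadd] at this
      linarith
    · intro h j hj
      rw [prefixExcess_vadd, sub_nonneg]
      exact h _ (by rw [Set.mem_Ico]; omega)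
  obtain ⟨a, ⟨ha, hmin⟩, huniq⟩ :=
    existsUnique_isMinOn_Ico_of_add_eq_sub_one n.succ_pos (prefixExcess_add_period f)
  refine ⟨-(a : ZMod (n + 1)), (key _).2 ?_, fun c hc => ?_⟩
  · rwa [neg_neg, ZMod.val_cast_of_lt ha]
  · rw [← huniq _ ⟨ZMod.val_lt _, (key c).1 hc⟩, ZMod.natCast_zmod_val, neg_neg]

end Circular

theorem card_parkingFunctions (n : ℕ) :
    Set.ncard {π : Fin n → ℕ | IsParkingFunction n π} = (n + 1) ^ (n - 1) := by
  set ι : (Fin n → ZMod (n + 1)) → Fin n → ℕ := fun g i => (g i).val + 1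
  have hι : ι.Injective := fun g g' h =>
    funext fun i => ZMod.val_injective _ (by simpa [ι] using congr_fun h i)
  have hrange : {π | IsParkingFunction n π} ⊆ Set.range ι := by
    intro π hπ
    refine ⟨fun i => ((π i - 1 : ℕ) : ZMod (n + 1)), funext fun i => ?_⟩
    have := hπ.le i
    have := ((isParkingFunction_iff_le_card.1 hπ).1 i)
    simp only [ι, ZMod.val_cast_of_lt (show π i - 1 < n + 1 by omega)]
    omega
  have hcount := Nat.card_mul_card_eq_of_existsUnique_vadd_mem
    (P := ι ⁻¹' {π | IsParkingFunction n π}) existsUnique_isParkingFunction_vadd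
  rw [Nat.card_fun, Nat.card_zmod, Nat.card_fin] at hcount
  rw [← Set.ncard_preimage_of_injective_subset_range hι hrange, ← Nat.card_coe_set_eq]
  cases n with
  | zero => simpa using hcount
  | succ n => exact Nat.eq_of_mul_eq_mul_right (Nat.succ_pos _) (hcount.trans (pow_succ _ n))
end

section
/- Let G be the group of n-tuples in {1,...,n+1}^n under componentwise addition modulo n+1, and let H be the cyclic subgroup generated by (1,1,...,1). Then every coset of H in G contains exactly one parking function of length n (identifying tuples with value n+1 never being a valid preference of a parking function, i.e., a coset representative is a parking function iff all its entries lie in {1,...,n} and it satisfies the parking condition). -/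
/-- Interpret an element of `ZMod (n+1)` as a preference in `{1, …, n+1}`
(the residue `0` corresponds to `n+1`). -/
def prefOfZMod (n : ℕ) (a : ZMod (n + 1)) : ℕ :=
  if a.val = 0 then n + 1 else a.val

open Finset

theorem Fin.card_filter_le_val (n s : ℕ) : #{i : Fin n | s ≤ (i : ℕ)} = n - s := by
  have h := card_filter_add_card_filter_not (s := univ) (fun i : Fin n => (i : ℕ) < s)
  simp only [Fin.card_filter_val_lt, not_lt, card_univ, Fintype.card_fin] at h
  omega

theorem card_filter_comp_equiv {α β : Type*} [Fintype α] [Fintype β] (p : β → Prop)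
    [DecidablePred p] (e : α ≃ β) : #{i | p (e i)} = #{j | p j} := by
  simp only [card_filter]
  exact e.sum_comp fun j => if p j then 1 else 0

theorem isParkingFunction_iff_card_le {n : ℕ} (π : Fin n → ℕ) :
    IsParkingFunction n π ↔ (∀ i, 1 ≤ π i) ∧ ∀ s, #{i | s ≤ π i} ≤ n + 1 - s := by
  refine and_congr_right fun _ => ⟨?_, fun h => ?_⟩
  · rintro ⟨σ, -, hσ⟩ s
    calc #{i | s ≤ π i} = #{i | s ≤ π (σ i)} := (card_filter_comp_equiv (s ≤ π ·) σ).symm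
      _ ≤ #{i : Fin n | s - 1 ≤ (i : ℕ)} :=
          card_le_card (monotone_filter_right _ fun i _ hi => by have := hσ i; omega)
      _ ≤ n + 1 - s := by rw [Fin.card_filter_le_val]; omega
  · refine ⟨Tuple.sort π, Tuple.monotone_sort π, fun i₀ => ?_⟩
    by_contra! hi₀
    have hlate : #{i : Fin n | (i₀ : ℕ) ≤ i} ≤ #{i | (i₀ : ℕ) + 2 ≤ π (Tuple.sort π i)} :=
      card_le_card (monotone_filter_right _ fun i _ hi =>
        (Nat.succ_le_of_lt hi₀).trans (Tuple.monotone_sort π (Fin.le_def.2 hi)))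
    rw [Fin.card_filter_le_val, card_filter_comp_equiv (_ ≤ π ·)] at hlate
    have := h ((i₀ : ℕ) + 2)
    omega

theorem isParkingFunction_succ_sub_iff {n : ℕ} (d : Fin n → ℕ) (hd : ∀ i, d i ≤ n) :
    IsParkingFunction n (fun i => n + 1 - d i) ↔ ∀ t ≤ n, #{i | d i ≤ t} ≤ t := by
  rw [isParkingFunction_iff_card_le]
  refine ⟨fun ⟨_, h⟩ t ht => ?_, fun h => ⟨fun i => by have := hd i; omega, fun s => ?_⟩⟩
  · calc #{i | d i ≤ t} ≤ #{i | n + 1 - t ≤ n + 1 - d i} :=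
          card_le_card (monotone_filter_right _ fun i _ hi => by omega)
      _ ≤ t := by have := h (n + 1 - t); omega
  · rcases Nat.eq_zero_or_pos s with rfl | hs
    · simp
    · calc #{i | s ≤ n + 1 - d i} ≤ #{i | d i ≤ n + 1 - s} :=
          card_le_card (monotone_filter_right _ fun i _ hi => by omega)
        _ ≤ n + 1 - s := h _ (by omega)

theorem prefOfZMod_eq (n : ℕ) (a : ZMod (n + 1)) : prefOfZMod n a = n + 1 - (-a).val := by
  simp only [prefOfZMod, ZMod.neg_val, ZMod.val_eq_zero]
  split_ifs with ha
  · rfl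
  · have := ZMod.val_lt a
    omega

section CycleLemma

variable (f : ℕ → ℤ) {p : ℕ}

theorem exists_forall_lt_of_add_period (hf : ∀ u, f (u + p) = f u + 1) :
    ∃ k < p, ∀ t < p, f k < f (k + t + 1) := by
  have hp : 0 < p := Nat.pos_of_ne_zero fun h => by simpa [h] using hf 0
  obtain ⟨k₀, hk₀, hmin₀⟩ := exists_min_image (range p) f ⟨0, mem_range.2 hp⟩
  obtain ⟨k, hk, hlast⟩ := exists_max_image {u ∈ range p | f u = f k₀} id ⟨k₀, by simp [hk₀]⟩
  simp only [mem_filter, mem_range, id] at hk hlast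
  have hmin : ∀ u < p, f k ≤ f u := fun u hu => hk.2 ▸ hmin₀ u (mem_range.2 hu)
  refine ⟨k, hk.1, fun t ht => ?_⟩
  rcases Nat.lt_or_ge (k + t + 1) p with hlt | hge
  · refine (hmin _ hlt).lt_of_ne fun heq => ?_
    have := hlast _ ⟨hlt, heq ▸ hk.2⟩
    omega
  · have := hmin (k + t + 1 - p) (by omega)
    rw [show k + t + 1 = k + t + 1 - p + p by omega, hf]
    omega

theorem not_forall_lt_of_add_period (hf : ∀ u, f (u + p) = f u + 1) {a b : ℕ} (hab : a < b)
    (hb : b < p) (ha : ∀ t < p, f a < f (a + t + 1)) : ¬ ∀ t < p, f b < f (b + t + 1) := by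
  intro hb'
  have h₁ := ha (b - a - 1) (by omega)
  have h₂ := hb' (a + p - b - 1) (by omega)
  rw [show a + (b - a - 1) + 1 = b by omega] at h₁
  rw [show b + (a + p - b - 1) + 1 = a + p by omega, hf] at h₂
  omega

theorem existsUnique_forall_lt_of_add_period (hf : ∀ u, f (u + p) = f u + 1) :
    ∃! k, k < p ∧ ∀ t < p, f k < f (k + t + 1) := by
  obtain ⟨k, hk, hgood⟩ := exists_forall_lt_of_add_period f hf
  refine ⟨k, ⟨hk, hgood⟩, fun k' ⟨hk', hgood'⟩ => ?_⟩
  rcases lt_trichotomy k' k with h | h | h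
  · exact absurd hgood (not_forall_lt_of_add_period f hf h hk hgood')
  · exact h
  · exact absurd hgood' (not_forall_lt_of_add_period f hf h hk' hgood)

end CycleLemma

theorem sub_mem_zmultiples_one_iff {ι : Type*} {n : ℕ} {c g : ι → ZMod (n + 1)} :
    c - g ∈ AddSubgroup.zmultiples (fun _ => 1) ↔ ∃ k < n + 1, c = fun i => g i + k := by
  rw [AddSubgroup.mem_zmultiples_iff]
  constructor
  · rintro ⟨z, hz⟩
    refine ⟨(z : ZMod (n + 1)).val, ZMod.val_lt _, funext fun i => ?_⟩
    have := congrFun hz i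
    simp only [Pi.smul_apply, Pi.sub_apply, zsmul_eq_mul, mul_one] at this
    rw [ZMod.natCast_zmod_val, this, add_sub_cancel]
  · rintro ⟨k, -, rfl⟩
    exact ⟨k, funext fun i => by simp⟩

namespace Pollak

section

variable {ι : Type*} [Fintype ι] {n : ℕ} (g : ι → ZMod (n + 1))

def surplus (u : ℕ) : ℤ := u - ∑ j ∈ range u, (#{i | -g i = j} : ℤ)

theorem card_window (k t : ℕ) (ht : t ≤ n) :
    #{i | (-g i - (k : ZMod (n + 1))).val ≤ t} =
      ∑ j ∈ range (t + 1), #{i | -g i = ↑(k + j)} := by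
  rw [card_eq_sum_card_fiberwise (f := fun i => (-g i - (k : ZMod (n + 1))).val)
    (t := range (t + 1)) fun i hi => mem_range.2 (Nat.lt_succ_of_le (mem_filter.1 hi).2)]
  refine sum_congr rfl fun j hj => ?_
  rw [filter_filter]
  refine congrArg card (filter_congr fun i _ => ?_)
  have hjn : j < n + 1 := by rw [mem_range] at hj; omega
  constructor
  · rintro ⟨-, hval : (-g i - (k : ZMod (n + 1))).val = j⟩
    rw [Nat.cast_add, ← sub_eq_iff_eq_add', ← ZMod.natCast_zmod_val (-g i - _), hval]
  · intro hi
    have hval : (-g i - (k : ZMod (n + 1))).val = j := by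
      rw [hi, Nat.cast_add, add_sub_cancel_left, ZMod.val_natCast_of_lt hjn]
    rw [mem_range] at hj
    refine ⟨?_, hval⟩
    beta_reduce
    omega

theorem surplus_add_period (u : ℕ) :
    surplus g (u + (n + 1)) = surplus g u + (n + 1) - Fintype.card ι := by
  have hfull := card_window g u n le_rfl
  rw [filter_true_of_mem fun i _ => Nat.lt_succ_iff.1 (ZMod.val_lt _), card_univ] at hfull
  rw [surplus, surplus, sum_range_add, ← Nat.cast_sum, ← Nat.cast_sum, ← hfull]
  push_cast
  ring

theorem card_window_le_iff (k t : ℕ) (ht : t ≤ n) :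
    #{i | (-g i - (k : ZMod (n + 1))).val ≤ t} ≤ t ↔ surplus g k < surplus g (k + t + 1) := by
  rw [card_window g k t ht, surplus, surplus, add_assoc, sum_range_add _ k (t + 1),
    ← Nat.cast_sum, ← Nat.cast_sum]
  omega

end

theorem isParkingFunction_add_iff {n : ℕ} (g : Fin n → ZMod (n + 1)) (k : ℕ) :
    IsParkingFunction n (fun i => prefOfZMod n (g i + k)) ↔
      ∀ t < n + 1, surplus g k < surplus g (k + t + 1) := by
  simp only [prefOfZMod_eq, neg_add, ← sub_eq_add_neg]
  rw [isParkingFunction_succ_sub_iff _ fun i => Nat.lt_succ_iff.1 (ZMod.val_lt _)]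
  exact forall_congr' fun t => by
    rw [Nat.lt_succ_iff]
    exact forall_congr' (card_window_le_iff g k t)

end Pollak

open Pollak in
/-- Pollak's circle argument: in the group `G = (ZMod (n+1))^n` under componentwise
addition, with `H` the cyclic subgroup generated by `(1,…,1)`, every coset of `H`
contains exactly one parking function. -/
theorem pollak_coset_unique_parkingFunction (n : ℕ) (g : Fin n → ZMod (n + 1)) :
    ∃! c : Fin n → ZMod (n + 1),
      c - g ∈ AddSubgroup.zmultiples (fun _ => (1 : ZMod (n + 1))) ∧
      IsParkingFunction n (fun i => prefOfZMod n (c i)) := by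
  obtain ⟨k, ⟨hk, hpark⟩, hunique⟩ :=
    existsUnique_forall_lt_of_add_period (surplus g) (p := n + 1) fun u => by
      rw [surplus_add_period, Fintype.card_fin]; ring
  refine ⟨fun i => g i + k,
    ⟨sub_mem_zmultiples_one_iff.2 ⟨k, hk, rfl⟩, (isParkingFunction_add_iff g k).2 hpark⟩, ?_⟩
  rintro c ⟨hc, hcpark⟩
  obtain ⟨k', hk', rfl⟩ := sub_mem_zmultiples_one_iff.1 hc
  rw [hunique k' ⟨hk', (isParkingFunction_add_iff g k').1 hcpark⟩]
end

section
/- For 1 ≤ m ≤ n, the sum over all parking functions π of length n of the number of m-cycles of π equals (m-1)! · C(n+1, m) · (n+1)^(n-m-1). Equivalently, the expected number of m-cycles of a uniformly random parking function of length n is (m-1)! · C(n+1, m)/(n+1)^m. -/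
/-- The number of `m`-cycles of `π`, counted up to cyclic rotation. -/
noncomputable def cycleCount (n m : ℕ) (π : Fin n → ℕ) : ℕ :=
  (Finset.univ.filter (fun c : Fin m ↪ Fin n =>
      ∀ j : Fin m, π (c j) = (c (finRotate m j) : ℕ) + 1)).card / m

/-!
Count pairs `(π, c)` of a parking function and an `m`-cycle `c` of `π` written as a tuple, so that
each cycle is counted `m` times. Parking functions are invariant under permuting the cars, so `c`
may be moved onto the first `m` cars; the pairs then correspond to the parking functions that are
injective on those cars, `c` being read off from the values there via `π (c j) = c (j + 1) + 1`.
By Pollak's argument exactly one of the `n + 1` translates mod `n + 1` of any map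
`Fin n → ZMod (n + 1)` is a parking function, and translation preserves injectivity on the first
`m` cars, so the pairs number `(n + 1)_m (n + 1)^(n - m) / (n + 1)`, and all parking functions
`(n + 1)^n / (n + 1)`.
-/

open Finset Function

section Characterization

variable {n : ℕ} {π : Fin n → ℕ}

theorem IsParkingFunction.comp_perm (h : IsParkingFunction n π) (σ : Equiv.Perm (Fin n)) :
    IsParkingFunction n (π ∘ σ) := by
  obtain ⟨hpos, τ, hmono, hle⟩ := h
  refine ⟨fun i => hpos (σ i), σ⁻¹ * τ, ?_, ?_⟩ <;> simpa [Function.comp_def]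

theorem IsParkingFunction.mem_Icc (h : IsParkingFunction n π) (i : Fin n) : π i ∈ Icc 1 n := by
  obtain ⟨hpos, σ, -, hle⟩ := h
  simpa [hpos i] using (hle (σ.symm i)).trans (Nat.succ_le_of_lt (σ.symm i).2)

theorem isParkingFunction_iff_card :
    IsParkingFunction n π ↔ ∀ j ≤ n, j ≤ #{i | π i ∈ Icc 1 j} := by
  constructor
  · rintro ⟨hpos, σ, -, hle⟩ j hj
    calc j = #{i : Fin n | (i : ℕ) < j} := by simp [Fin.card_filter_val_lt, hj]
      _ ≤ #{i | π i ∈ Icc 1 j} := by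
        refine card_le_card_of_injOn σ (fun i hi => ?_) σ.injective.injOn
        simp only [coe_filter, Set.mem_ofPred_eq, mem_univ, true_and, mem_Icc] at hi ⊢
        exact ⟨hpos _, (hle i).trans (by omega)⟩
  · intro h
    have hmem : ∀ i, π i ∈ Icc 1 n := by
      have hcard : #{i | π i ∈ Icc 1 n} = #(univ : Finset (Fin n)) :=
        le_antisymm (card_le_univ _) (by simpa using h n le_rfl)
      simpa using (filter_eq_self.1 (eq_of_subset_of_card_le (filter_subset _ _) hcard.ge))
    refine ⟨fun i => (mem_Icc.1 (hmem i)).1, Tuple.sort π, Tuple.monotone_sort π, fun i => ?_⟩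
    by_contra! hlt
    have : #{x | π x ∈ Icc 1 ((i : ℕ) + 1)} ≤ #{k : Fin n | (k : ℕ) < i} := by
      refine card_le_card_of_injOn (Tuple.sort π).symm (fun x hx => ?_)
        (Tuple.sort π).symm.injective.injOn
      simp only [coe_filter, Set.mem_ofPred_eq, mem_univ, true_and, mem_Icc] at hx ⊢
      by_contra! hge
      have := Tuple.monotone_sort π (show i ≤ (Tuple.sort π).symm x from hge)
      simp only [comp_apply, Equiv.apply_symm_apply] at this
      omega
    rw [Fin.card_filter_val_lt] at this
    have := h (i + 1) i.2
    omega

end Characterization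

theorem existsUnique_lt_forall_le_add {p : ℕ} (hp : 0 < p) {G : ℕ → ℤ}
    (hG : ∀ j, G (j + p) = G j - 1) : ∃! K, K < p ∧ ∀ j < p, G K ≤ G (K + j) := by
  have hmin : ∃ K, K < p ∧ ∀ K' < p, G K ≤ G K' := by
    obtain ⟨K, hK, hmin⟩ := exists_min_image (range p) G ⟨0, mem_range.2 hp⟩
    exact ⟨K, mem_range.1 hK, fun K' hK' => hmin K' (mem_range.2 hK')⟩
  classical
  -- The first minimiser of `G` on `[0, p)` works: beyond `p`, `G` is lowered by one, but it is
  -- evaluated there at points shifted back below that minimiser, where `G` exceeds its minimum.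
  obtain ⟨hK₀p, hK₀⟩ := Nat.find_spec hmin
  have hK₀ : ∀ j < p, G (Nat.find hmin) ≤ G (Nat.find hmin + j) := by
    intro j hj
    rcases lt_or_ge (Nat.find hmin + j) p with h | h
    · exact hK₀ _ h
    · obtain ⟨K', hK'p, hK'⟩ : ∃ K' < p, G K' < G (Nat.find hmin + j - p) := by
        simpa [show Nat.find hmin + j - p < p by omega] using
          Nat.find_min hmin (show Nat.find hmin + j - p < Nat.find hmin by omega)
      have := hG (Nat.find hmin + j - p)
      rw [Nat.sub_add_cancel h] at this
      linarith [hK₀ K' hK'p]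
  have not_both : ∀ K₁ K₂, K₁ < K₂ → K₂ < p → (∀ j < p, G K₁ ≤ G (K₁ + j)) →
      (∀ j < p, G K₂ ≤ G (K₂ + j)) → False := by
    intro K₁ K₂ h₁₂ h₂ hK₁ hK₂
    have h1 := hK₁ (K₂ - K₁) (by omega)
    have h2 := hK₂ (K₁ + p - K₂) (by omega)
    rw [Nat.add_sub_cancel' h₁₂.le] at h1
    rw [show K₂ + (K₁ + p - K₂) = K₁ + p by omega, hG] at h2
    linarith
  refine ⟨Nat.find hmin, ⟨hK₀p, hK₀⟩, fun K ⟨hKp, hK⟩ => ?_⟩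
  rcases lt_trichotomy K (Nat.find hmin) with h | h | h
  · exact (not_both _ _ h hK₀p hK hK₀).elim
  · exact h
  · exact (not_both _ _ h hKp hK₀ hK).elim

theorem ZMod.sum_range_natCast {p : ℕ} [NeZero p] {M : Type*} [AddCommMonoid M] (f : ZMod p → M) :
    ∑ t ∈ range p, f t = ∑ x, f x := by
  refine sum_nbij (fun t : ℕ => (t : ZMod p)) (by simp) (fun s hs t ht h => ?_)
    (fun x _ => ⟨x.val, by simp [ZMod.val_lt], ZMod.natCast_zmod_val x⟩) (fun _ _ => rfl)
  simp only [coe_range, Set.mem_Iio] at hs ht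
  have := congrArg ZMod.val h
  rwa [ZMod.val_natCast_of_lt hs, ZMod.val_natCast_of_lt ht] at this

/-- Raney's cycle lemma. -/
theorem existsUnique_forall_sum_range_nonneg {p : ℕ} [NeZero p] (a : ZMod p → ℤ)
    (ha : ∑ x, a x = -1) : ∃! k : ZMod p, ∀ j < p, 0 ≤ ∑ t ∈ range j, a (k + t) := by
  set G : ℕ → ℤ := fun j => ∑ t ∈ range j, a t
  have hshift : ∀ K j : ℕ, ∑ t ∈ range j, a ((K : ZMod p) + t) = G (K + j) - G K := by
    intro K j
    simp [G, sum_range_add]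
  have hG : ∀ j, G (j + p) = G j - 1 := by
    intro j
    have hrot : ∑ x, a ((j : ZMod p) + x) = ∑ x, a x := Equiv.sum_comp (Equiv.addLeft _) a
    have := hshift j p
    rw [ZMod.sum_range_natCast (fun x => a ((j : ZMod p) + x)), hrot, ha] at this
    linarith
  obtain ⟨K, ⟨hKp, hK⟩, huniq⟩ := existsUnique_lt_forall_le_add (NeZero.pos p) hG
  refine ⟨K, fun j hj => ?_, fun k hk => ?_⟩
  · rw [hshift]
    linarith [hK j hj]
  · rw [← ZMod.natCast_zmod_val k, huniq k.val ⟨ZMod.val_lt k, fun j hj => ?_⟩]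
    have := hk j hj
    rw [← ZMod.natCast_zmod_val k, hshift] at this
    linarith

instance (n : ℕ) : DecidablePred (IsParkingFunction n) :=
  fun _ => decidable_of_iff _ isParkingFunction_iff_card.symm

section Pollak

variable {n : ℕ}

theorem card_filter_mem_Icc_one {ι : Type*} [Fintype ι] (π : ι → ℕ) (j : ℕ) :
    #{i | π i ∈ Icc 1 j} = ∑ t ∈ range j, #{i | π i = t + 1} := by
  classical
  induction j with
  | zero => simp
  | succ j ih =>
    rw [sum_range_succ, ← ih, ← card_union_of_disjoint (disjoint_filter.2 fun i _ h => by
      simp only [mem_Icc] at h; omega), ← filter_or]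
    congr 1
    ext i
    simp only [mem_filter, mem_univ, true_and, mem_Icc]
    omega

theorem ZMod.val_eq_add_one_iff {t : ℕ} (ht : t < n) (x : ZMod (n + 1)) :
    x.val = t + 1 ↔ x = t + 1 := by
  constructor
  · intro h
    rw [← ZMod.natCast_zmod_val x, h, Nat.cast_succ]
  · rintro rfl
    rw [← Nat.cast_succ, ZMod.val_natCast_of_lt (by omega)]

/-- Pollak's circular argument: the cycle lemma applied to the fibre sizes of `g`. -/
theorem existsUnique_isParkingFunction_sub (g : Fin n → ZMod (n + 1)) :
    ∃! k : ZMod (n + 1), IsParkingFunction n fun i => (g i - k).val := by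
  set a : ZMod (n + 1) → ℤ := fun x => #{i | g i = x + 1} - 1
  have ha : ∑ x, a x = -1 := by
    have hfib : ∑ x, #{i | g i = x + 1} = n := by
      have hrot : ∑ x, #{i | g i = x + 1} = ∑ y, #{i | g i = y} :=
        Equiv.sum_comp (Equiv.addRight 1) fun y => #{i | g i = y}
      simpa [hrot] using
        (card_eq_sum_card_fiberwise (f := g) (s := univ) (t := univ) (by simp)).symm
    simp only [a, sum_sub_distrib, sum_const, card_univ, ZMod.card]
    rw [← Nat.cast_sum, hfib]
    simp
  have hcount : ∀ k, ∀ j ≤ n,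
      (#{i | (g i - k).val ∈ Icc 1 j} : ℤ) = ∑ t ∈ range j, a (k + t) + j := by
    intro k j hj
    rw [card_filter_mem_Icc_one, Nat.cast_sum]
    simp only [a, sum_sub_distrib, sum_const, card_range, nsmul_eq_mul, mul_one, sub_add_cancel]
    refine sum_congr rfl fun t ht => ?_
    congr 2
    ext i
    simp only [mem_filter, mem_univ, true_and]
    rw [ZMod.val_eq_add_one_iff (by simp at ht; omega), sub_eq_iff_eq_add', add_assoc]
  refine (existsUnique_congr fun k => ?_).1 (existsUnique_forall_sum_range_nonneg a ha)
  rw [isParkingFunction_iff_card]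
  refine forall_congr' fun j => ⟨fun h hj => ?_, fun h hj => ?_⟩
  · linarith [hcount k j hj, h (by omega)]
  · linarith [hcount k j (by omega), h (by omega)]

theorem card_filter_isParkingFunction_mul (Q : (Fin n → ZMod (n + 1)) → Prop) [DecidablePred Q]
    (hQ : ∀ g k, Q g → Q fun i => g i + k) :
    #{g | Q g ∧ IsParkingFunction n fun i => (g i).val} * (n + 1) = #{g | Q g} := by
  calc _ = #(({g | Q g ∧ IsParkingFunction n fun i => (g i).val} : Finset _) ×ˢ
          (univ : Finset (ZMod (n + 1)))) := by
        rw [card_product, card_univ, ZMod.card]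
    _ = #{g | Q g} := ?_
  refine card_bij (fun p _ i => p.1 i + p.2) (fun p hp => ?_) (fun p hp q hq h => ?_)
    (fun h hh => ?_)
  · simp only [mem_product, mem_filter, mem_univ, true_and] at hp ⊢
    exact hQ _ _ hp.1.1
  · simp only [mem_product, mem_filter, mem_univ, true_and] at hp hq
    have hi : ∀ i, p.1 i + p.2 = q.1 i + q.2 := congrFun h
    obtain ⟨k, -, huniq⟩ := existsUnique_isParkingFunction_sub fun i => p.1 i + p.2
    have hk : p.2 = q.2 :=
      (huniq p.2 (by simpa using hp.1.2)).trans (huniq q.2 (by simpa [hi] using hq.1.2)).symm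
    exact Prod.ext (funext fun i => by simpa [hk] using hi i) hk
  · simp only [mem_filter, mem_univ, true_and] at hh
    obtain ⟨k, hk, -⟩ := existsUnique_isParkingFunction_sub h
    refine ⟨(fun i => h i - k, k), ?_, by simp⟩
    simp only [mem_product, mem_filter, mem_univ, true_and, and_true]
    exact ⟨by simpa [sub_eq_add_neg] using hQ h (-k) hh, hk⟩

end Pollak

theorem card_filter_injective_comp {α β X : Type*} [Fintype α] [Fintype β] [Fintype X]
    [DecidableEq α] [DecidableEq β] [DecidableEq X] (e : β ↪ α) :
    #{g : α → X | Injective (g ∘ e)} =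
      (Fintype.card X).descFactorial (Fintype.card β) *
        Fintype.card X ^ (Fintype.card α - Fintype.card β) := by
  classical
  let E : (α → X) ≃ (β → X) × ({a // a ∉ Set.range e} → X) :=
    (Equiv.piEquivPiSubtypeProd (· ∈ Set.range e) fun _ => X).trans
      ((Equiv.arrowCongr (Equiv.ofInjective e e.injective).symm (Equiv.refl X)).prodCongr
        (Equiv.refl _))
  have hE : ∀ g, (E g).1 = g ∘ e := fun g => rfl
  rw [card_equiv E (t := {p | Injective p.1}) (fun g => by simp [hE]), ← univ_product_univ,
    filter_product_left, card_product, card_univ, Fintype.card_fun,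
    Fintype.card_subtype_compl, Set.card_range_of_injective e.injective, ← Fintype.card_subtype,
    Fintype.card_congr (Equiv.subtypeInjectiveEquivEmbedding β X), Fintype.card_embedding_eq]

theorem Equiv.Perm.dvd_card_of_minimalPeriod_eq {α : Type*} (σ : Equiv.Perm α) {m : ℕ}
    {s : Finset α} (hs : ∀ x, σ x ∈ s ↔ x ∈ s) (h : ∀ x ∈ s, minimalPeriod σ x = m) :
    m ∣ #s := by
  classical
  set τ := σ.subtypePerm hs
  have hτ : ∀ x, minimalPeriod τ x = m := by
    refine fun x => (minimalPeriod_eq_minimalPeriod_iff.2 fun t => ?_).trans (h x x.2)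
    simp only [IsPeriodicPt, IsFixedPt, ← Equiv.Perm.coe_pow, τ, Equiv.Perm.subtypePerm_pow,
      Subtype.ext_iff, Equiv.Perm.subtypePerm_apply]
  -- the orbits of `τ` partition `s`, and each has `m` elements
  rw [← Fintype.card_coe,
    Fintype.card_congr (MulAction.selfEquivSigmaOrbits (Subgroup.zpowers τ) s), Fintype.card_sigma]
  refine Finset.dvd_sum fun ω _ => ?_
  rw [← MulAction.minimalPeriod_eq_card]
  exact (hτ _).symm.dvd

theorem minimalPeriod_embeddingCongr {β γ : Type*} (τ : Equiv.Perm β) (c : β ↪ γ) :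
    minimalPeriod (Equiv.embeddingCongr τ.symm (Equiv.refl γ)) c = orderOf τ := by
  set ρ := Equiv.embeddingCongr τ.symm (Equiv.refl γ)
  have hiter : ∀ t c b, (ρ^[t] c) b = c ((τ ^ t) b) := by
    intro t
    induction t with
    | zero => simp
    | succ t ih => intro c b; simp [ρ, iterate_succ_apply, ih, pow_succ']
  have hper : ∀ t, IsPeriodicPt ρ t c ↔ orderOf τ ∣ t := by
    intro t
    rw [orderOf_dvd_iff_pow_eq_one, IsPeriodicPt, IsFixedPt, DFunLike.ext_iff, Equiv.ext_iff]
    simp [hiter]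
  exact Nat.dvd_antisymm (isPeriodicPt_iff_minimalPeriod_dvd.1 ((hper _).2 dvd_rfl))
    ((hper _).1 (isPeriodicPt_minimalPeriod _ _))

theorem orderOf_finRotate {m : ℕ} (hm : 0 < m) : orderOf (finRotate m) = m := by
  obtain rfl | hm := (Nat.one_le_iff_ne_zero.2 hm.ne').eq_or_lt
  · rw [finRotate_one, ← Equiv.Perm.one_def, orderOf_one]
  · rw [(isCycle_finRotate_of_le hm).orderOf, support_finRotate_of_le hm, card_univ,
      Fintype.card_fin]

section DoubleCounting

theorem Function.Embedding.exists_perm_apply_eq {α β : Type*} [Finite α] (e c : β ↪ α) :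
    ∃ σ : Equiv.Perm α, ∀ b, σ (e b) = c b := by
  classical
  refine ⟨((Equiv.ofInjective e e.injective).symm.trans
    (Equiv.ofInjective c c.injective)).extendSubtype, fun b => ?_⟩
  rw [Equiv.extendSubtype_apply_of_mem _ _ ⟨b, rfl⟩]
  simp

variable {α β X : Type*} [Fintype α] [Fintype β] [DecidableEq X]

theorem card_filter_apply_embedding_eq (s : Finset (α → X))
    (hs : ∀ g ∈ s, ∀ σ : Equiv.Perm α, g ∘ σ ∈ s) (e c : β ↪ α) (w : β → X) :
    #{g ∈ s | ∀ b, g (c b) = w b} = #{g ∈ s | ∀ b, g (e b) = w b} := by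
  obtain ⟨σ, hσ⟩ := e.exists_perm_apply_eq c
  refine card_nbij' (· ∘ σ) (· ∘ σ.symm) (fun g hg => ?_) (fun g hg => ?_)
    (fun g _ => by simp [comp_def]) (fun g _ => by simp [comp_def])
  · simp only [coe_filter, Set.mem_ofPred_eq] at hg ⊢
    exact ⟨hs g hg.1 σ, by simpa [hσ] using hg.2⟩
  · simp only [coe_filter, Set.mem_ofPred_eq] at hg ⊢
    refine ⟨hs g hg.1 σ.symm, fun b => ?_⟩
    simpa [← hσ] using hg.2 b

theorem sum_card_filter_apply_embedding_eq [DecidableEq α] [DecidableEq β] (s : Finset (α → X))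
    (hs : ∀ g ∈ s, ∀ σ : Equiv.Perm α, g ∘ σ ∈ s) {V : (β ↪ α) → β → X} (hV : Injective V)
    (e : β ↪ α) :
    ∑ g ∈ s, #{c | ∀ b, g (c b) = V c b} = #{g ∈ s | ∃ c, ∀ b, g (e b) = V c b} := by
  calc ∑ g ∈ s, #{c | ∀ b, g (c b) = V c b} = ∑ c, #{g ∈ s | ∀ b, g (c b) = V c b} :=
        sum_card_bipartiteAbove_eq_sum_card_bipartiteBelow _
    _ = ∑ c, #{g ∈ s | ∀ b, g (e b) = V c b} :=
        sum_congr rfl fun c _ => card_filter_apply_embedding_eq s hs e c (V c)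
    _ = _ := ?_
  rw [← card_biUnion]
  · congr 1
    ext g
    simp
  · intro c _ c' _ hcc'
    refine disjoint_filter.2 fun g _ hc hc' => hcc' (hV (funext fun b => ?_))
    rw [← hc b, hc' b]

end DoubleCounting

section Cycles

variable {n m : ℕ}

/-- `c` is an `m`-cycle of `π` exactly when `π (c j) = cycleValues c j` for all `j`. -/
def cycleValues (c : Fin m ↪ Fin n) (j : Fin m) : ℕ := c (finRotate m j) + 1

theorem cycleValues_injective : Injective (cycleValues : (Fin m ↪ Fin n) → Fin m → ℕ) := by
  intro c c' h
  ext j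
  have := congrFun h ((finRotate m).symm j)
  simpa only [cycleValues, Equiv.apply_symm_apply, add_left_inj] using this

theorem exists_cycleValues_eq_iff {f : Fin m → ℕ} (hf : ∀ j, f j ∈ Icc 1 n) :
    (∃ c : Fin m ↪ Fin n, cycleValues c = f) ↔ Injective f := by
  have hf' : ∀ j, 1 ≤ f j ∧ f j ≤ n := fun j => mem_Icc.1 (hf j)
  constructor
  · rintro ⟨c, rfl⟩ j j' h
    simpa [cycleValues, Fin.val_inj] using h
  · intro hinj
    refine ⟨⟨fun j => ⟨f ((finRotate m).symm j) - 1, by have := hf' ((finRotate m).symm j); omega⟩,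
      fun j j' h => ?_⟩, funext fun j => ?_⟩
    · have := hf' ((finRotate m).symm j)
      have := hf' ((finRotate m).symm j')
      exact (finRotate m).symm.injective (hinj (by simp only [Fin.mk.injEq] at h; omega))
    · change f ((finRotate m).symm (finRotate m j)) - 1 + 1 = f j
      rw [Equiv.symm_apply_apply]
      have := hf' j
      omega

theorem dvd_card_filter_cycleValues (hm : 0 < m) (π : Fin n → ℕ) :
    m ∣ #{c : Fin m ↪ Fin n | ∀ j, π (c j) = cycleValues c j} := by
  refine Equiv.Perm.dvd_card_of_minimalPeriod_eq
    (Equiv.embeddingCongr (finRotate m).symm (Equiv.refl _)) (fun c => ?_) fun c _ => ?_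
  · simp only [mem_filter, mem_univ, true_and]
    exact (finRotate m).forall_congr_right (q := fun j => π (c j) = cycleValues c j)
  · rw [minimalPeriod_embeddingCongr, orderOf_finRotate hm]

theorem cycleCount_mul (hm : 0 < m) (π : Fin n → ℕ) :
    cycleCount n m π * m = #{c : Fin m ↪ Fin n | ∀ j, π (c j) = cycleValues c j} :=
  Nat.div_mul_cancel (dvd_card_filter_cycleValues hm π)

end Cycles

section Counting

variable {n m : ℕ}

/-- Parking functions take values in `[1, n]`, so each is the reduction mod `n + 1` of its own
values; this is the form in which Pollak's argument counts them. -/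
def parkingFunctions (n : ℕ) : Finset (Fin n → ℕ) :=
  ({g | IsParkingFunction n fun i => (g i).val} : Finset (Fin n → ZMod (n + 1))).image
    fun g i => (g i).val

theorem mem_parkingFunctions {π : Fin n → ℕ} :
    π ∈ parkingFunctions n ↔ IsParkingFunction n π := by
  simp only [parkingFunctions, mem_image, mem_filter, mem_univ, true_and]
  refine ⟨fun ⟨g, hg, hgπ⟩ => hgπ ▸ hg, fun hπ => ⟨fun i => (π i : ZMod (n + 1)), ?_⟩⟩
  have hval : (fun i => ((π i : ZMod (n + 1))).val) = π :=
    funext fun i => ZMod.val_natCast_of_lt (Nat.lt_succ_of_le (mem_Icc.1 (hπ.mem_Icc i)).2)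
  exact ⟨by rwa [hval], hval⟩

theorem coe_parkingFunctions :
    (parkingFunctions n : Set (Fin n → ℕ)) = {π | IsParkingFunction n π} :=
  Set.ext fun _ => mem_parkingFunctions

theorem card_filter_parkingFunctions_mul (Q : (Fin n → ℕ) → Prop) [DecidablePred Q]
    (hQ : ∀ (g : Fin n → ZMod (n + 1)) k, Q (fun i => (g i).val) → Q fun i => (g i + k).val) :
    #{π ∈ parkingFunctions n | Q π} * (n + 1) =
      #{g : Fin n → ZMod (n + 1) | Q fun i => (g i).val} := by
  have hinj : Injective fun (g : Fin n → ZMod (n + 1)) i => (g i).val :=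
    fun g g' h => funext fun i => ZMod.val_injective _ (congrFun h i)
  rw [parkingFunctions, filter_image, card_image_of_injective _ hinj, filter_filter,
    ← card_filter_isParkingFunction_mul _ hQ]
  simp only [and_comm]

theorem card_parkingFunctions_mul : #(parkingFunctions n) * (n + 1) = (n + 1) ^ n := by
  simpa using card_filter_parkingFunctions_mul (n := n) (fun _ => True) (by simp)

theorem sum_card_filter_cycleValues_mul (hmn : m ≤ n) :
    (∑ π ∈ parkingFunctions n, #{c : Fin m ↪ Fin n | ∀ j, π (c j) = cycleValues c j}) * (n + 1) =
      (n + 1).descFactorial m * (n + 1) ^ (n - m) := by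
  set e := Fin.castLEEmb hmn
  have hperm : ∀ π ∈ parkingFunctions n, ∀ σ : Equiv.Perm (Fin n), π ∘ σ ∈ parkingFunctions n :=
    fun π hπ σ => mem_parkingFunctions.2 ((mem_parkingFunctions.1 hπ).comp_perm σ)
  have hcycle : ∀ π ∈ parkingFunctions n,
      (∃ c : Fin m ↪ Fin n, ∀ j, π (e j) = cycleValues c j) ↔ Injective (π ∘ e) := fun π hπ => by
    refine Iff.trans (exists_congr fun c => ?_)
      (exists_cycleValues_eq_iff (f := π ∘ e) fun j => (mem_parkingFunctions.1 hπ).mem_Icc _)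
    rw [funext_iff]
    exact forall_congr' fun j => eq_comm
  calc (∑ π ∈ parkingFunctions n, #{c : Fin m ↪ Fin n | ∀ j, π (c j) = cycleValues c j}) * (n + 1)
      = #{π ∈ parkingFunctions n | Injective (π ∘ e)} * (n + 1) := by
        rw [← filter_congr hcycle]
        convert congrArg (· * (n + 1))
          (sum_card_filter_apply_embedding_eq _ hperm cycleValues_injective e)
    _ = #{g : Fin n → ZMod (n + 1) | Injective (g ∘ e)} := by
        have hshift : ∀ (g : Fin n → ZMod (n + 1)) k, Injective ((fun i => (g i).val) ∘ e) →
            Injective ((fun i => (g i + k).val) ∘ e) := fun g k hg a b h =>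
          hg (congrArg ZMod.val (add_right_cancel (ZMod.val_injective (n + 1) h :
            g (e a) + k = g (e b) + k)))
        rw [card_filter_parkingFunctions_mul _ hshift]
        exact congrArg card (filter_congr fun g _ => (ZMod.val_injective _).of_comp_iff (g ∘ e))
    _ = (n + 1).descFactorial m * (n + 1) ^ (n - m) := by
        simp [card_filter_injective_comp]

theorem sum_cycleCount_mul (hm : 0 < m) (hmn : m ≤ n) :
    (∑ π ∈ parkingFunctions n, cycleCount n m π) * m * (n + 1) =
      (n + 1).descFactorial m * (n + 1) ^ (n - m) := by
  rw [sum_mul, sum_congr rfl fun π _ => cycleCount_mul hm π, sum_card_filter_cycleValues_mul hmn]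

end Counting

/-- The total number of `m`-cycles over all parking functions of length `n` is
`(m-1)! · C(n+1,m) · (n+1)^(n-m-1)`; equivalently the expected number of `m`-cycles
of a uniformly random parking function is `(m-1)! · C(n+1,m)/(n+1)^m`. -/
theorem sum_cycleCount_parkingFunctions (n m : ℕ) (hm : 1 ≤ m) (hmn : m ≤ n) :
    (∑ᶠ π ∈ {π : Fin n → ℕ | IsParkingFunction n π}, (cycleCount n m π : ℚ)) =
      ((m - 1).factorial : ℚ) * ((n + 1).choose m : ℚ) *
        ((n : ℚ) + 1) ^ ((n : ℤ) - (m : ℤ) - 1) ∧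
    (∑ᶠ π ∈ {π : Fin n → ℕ | IsParkingFunction n π}, (cycleCount n m π : ℚ)) /
        (Set.ncard {π : Fin n → ℕ | IsParkingFunction n π} : ℚ) =
      ((m - 1).factorial : ℚ) * ((n + 1).choose m : ℚ) / ((n : ℚ) + 1) ^ m := by
  have hsum : (∑ᶠ π ∈ {π | IsParkingFunction n π}, (cycleCount n m π : ℚ)) * m * (n + 1) =
      m * (m - 1).factorial * (n + 1).choose m * ((n : ℚ) + 1) ^ (n - m) := by
    rw [← coe_parkingFunctions, finsum_mem_coe_finset]
    exact_mod_cast (sum_cycleCount_mul hm hmn).trans (by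
      rw [Nat.descFactorial_eq_factorial_mul_choose, ← Nat.mul_factorial_pred (by omega)])
  have hcard : (Set.ncard {π | IsParkingFunction n π} : ℚ) * (n + 1) =
      ((n : ℚ) + 1) ^ (n - m) * ((n : ℚ) + 1) ^ m := by
    rw [← coe_parkingFunctions, Set.ncard_coe_finset, ← pow_add, Nat.sub_add_cancel hmn]
    exact_mod_cast card_parkingFunctions_mul
  set S := ∑ᶠ π ∈ {π : Fin n → ℕ | IsParkingFunction n π}, (cycleCount n m π : ℚ)
  set P := (Set.ncard {π : Fin n → ℕ | IsParkingFunction n π} : ℚ)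
  have hq : (n : ℚ) + 1 ≠ 0 := by positivity
  have hm0 : (m : ℚ) ≠ 0 := by positivity
  have hP : P ≠ 0 := left_ne_zero_of_mul (hcard ▸ mul_ne_zero (pow_ne_zero _ hq) (pow_ne_zero _ hq))
  constructor
  · rw [← Nat.cast_sub hmn, zpow_sub_one₀ hq, zpow_natCast, ← div_eq_mul_inv, mul_div_assoc',
      eq_div_iff hq]
    apply mul_left_cancel₀ hm0
    linear_combination hsum
  · rw [div_eq_div_iff hP (pow_ne_zero _ hq)]
    apply mul_left_cancel₀ (mul_ne_zero hm0 hq)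
    linear_combination ((n : ℚ) + 1) ^ m * hsum - m * (m - 1).factorial * (n + 1).choose m * hcard
end

section
/- The number of prime parking functions of length n is (n-1)^(n-1). -/
/-- A prime parking function of length `n`: a parking function such that for every
`1 ≤ j ≤ n-1`, at least `j+1` of the entries are at most `j`. -/
def IsPrimeParkingFunction (n : ℕ) (π : Fin n → ℕ) : Prop :=
  IsParkingFunction n π ∧ ∀ j : ℕ, 1 ≤ j → j ≤ n - 1 →
    j + 1 ≤ (Finset.univ.filter (fun i : Fin n => π i ≤ j)).card


open Finset

attribute [local instance] Classical.propDecidable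

namespace PPFAux

/-- Cumulative arrival count for the circular argument. -/
def Fc (m : ℕ) [NeZero m] (a : Fin (m+1) → ZMod m) (t : ℕ) : ℕ :=
  ∑ i, (t + (m - 1 - (a i).val)) / m

lemma step (m t j v w : ℕ) (hm : 0 < m) (hv : v < m) (hw : w < m) (hj : j ≤ m)
    (hvw : (w + t) % m = v) :
    (t + (m - 1 - v) + j) / m = (t + (m - 1 - v)) / m + (if w + 1 ≤ j then 1 else 0) := by
  set s := t + (m - 1 - v) with hs
  have h1 : (s + w) % m = m - 1 := by
    have e : s + w = (w + t) + (m - 1 - v) := by omega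
    have e2 : (m - 1 - v) % m = m - 1 - v := Nat.mod_eq_of_lt (by omega)
    rw [e, Nat.add_mod, hvw, e2, show v + (m - 1 - v) = m - 1 by omega,
      Nat.mod_eq_of_lt (by omega)]
  have h2 : (s % m + w) % m = m - 1 := by
    have hd := Nat.div_add_mod s m
    have e3 : s + w = m * (s / m) + (s % m + w) := by omega
    rw [e3, Nat.mul_add_mod] at h1
    exact h1
  have hr : s % m < m := Nat.mod_lt _ hm
  have hsw : s % m = m - 1 - w := by
    rcases Nat.lt_or_ge (s % m + w) m with h | h
    · rw [Nat.mod_eq_of_lt h] at h2; omega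
    · rw [Nat.mod_eq_sub_mod h, Nat.mod_eq_of_lt (by omega)] at h2; omega
  have hq := Nat.div_add_mod s m
  have e4 : s + j = m * (s / m) + (s % m + j) := by omega
  have hdiv : (m - 1 - w + j) / m = if w + 1 ≤ j then 1 else 0 := by
    by_cases hc : w + 1 ≤ j
    · rw [if_pos hc, show m - 1 - w + j = (m - 1 - w + j - m) + m by omega,
        Nat.add_div_right _ hm, Nat.div_eq_of_lt (show m - 1 - w + j - m < m by omega)]
    · rw [if_neg hc]
      exact Nat.div_eq_of_lt (by omega)
  rw [e4, Nat.mul_add_div hm, hsw, hdiv]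

lemma window (m : ℕ) [NeZero m] (a : Fin (m+1) → ZMod m) (t j : ℕ) (hj : j ≤ m) :
    Fc m a (t + j) = Fc m a t
      + (univ.filter (fun i => ((a i) - (t : ZMod m)).val + 1 ≤ j)).card := by
  have hm : 0 < m := Nat.pos_of_ne_zero (NeZero.ne m)
  unfold Fc
  rw [card_filter, ← Finset.sum_add_distrib]
  apply Finset.sum_congr rfl
  intro i _
  have hv : (a i).val < m := ZMod.val_lt _
  have hw : ((a i) - (t : ZMod m)).val < m := ZMod.val_lt _
  have hvw : (((a i) - (t : ZMod m)).val + t) % m = (a i).val := by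
    have e : ((a i) - (t : ZMod m)) + (t : ZMod m) = a i := by ring
    have h := congrArg ZMod.val e
    rw [ZMod.val_add, ZMod.val_natCast] at h
    rw [← Nat.add_mod_mod]
    exact h
  have hst := step m t j (a i).val ((a i) - (t : ZMod m)).val hm hv hw hj hvw
  rw [show t + j + (m - 1 - (a i).val) = t + (m - 1 - (a i).val) + j by omega]
  exact hst

lemma Fc_period (m : ℕ) [NeZero m] (a : Fin (m+1) → ZMod m) (t : ℕ) :
    Fc m a (t + m) = Fc m a t + (m + 1) := by
  rw [window m a t m le_rfl]
  congr 1
  rw [filter_true_of_mem, card_univ, Fintype.card_fin]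
  intro i _
  have := ZMod.val_lt ((a i) - (t : ZMod m))
  omega

def Good (m : ℕ) [NeZero m] (a : Fin (m+1) → ZMod m) (t : ℕ) : Prop :=
  ∀ j, 1 ≤ j → j ≤ m → Fc m a t + j + 1 ≤ Fc m a (t + j)

def PCond (m : ℕ) (b : Fin (m+1) → ZMod m) : Prop :=
  ∀ j, 1 ≤ j → j ≤ m → j + 1 ≤ (univ.filter (fun i => (b i).val + 1 ≤ j)).card

lemma pcond_shift (m : ℕ) [NeZero m] (a : Fin (m+1) → ZMod m) (t : ℕ) :
    PCond m (fun i => a i - (t : ZMod m)) ↔ Good m a t := by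
  unfold PCond Good
  constructor <;> intro h j hj1 hjm <;>
    [skip; skip] <;>
  · have hw := window m a t j hjm
    have hh := h j hj1 hjm
    simp only at hh hw ⊢
    omega

lemma exists_good (m : ℕ) [NeZero m] (a : Fin (m+1) → ZMod m) : ∃ t < m, Good m a t := by
  have hm : 0 < m := Nat.pos_of_ne_zero (NeZero.ne m)
  set P : ℕ → ℤ := fun t => (Fc m a t : ℤ) - t with hP
  have hper : ∀ t, P (t + m) = P t + 1 := by
    intro t
    have := Fc_period m a t
    simp only [hP]
    push_cast [this]
    ring
  have hQne : ((Finset.range m).image P).Nonempty :=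
    ⟨P 0, Finset.mem_image_of_mem P (Finset.mem_range.2 hm)⟩
  set μ := ((Finset.range m).image P).min' hQne with hμ
  have hμmem := ((Finset.range m).image P).min'_mem hQne
  obtain ⟨t1, ht1, hPt1⟩ := Finset.mem_image.1 hμmem
  set Sf := (Finset.range m).filter (fun t => P t = μ) with hSf
  have hSfne : Sf.Nonempty := ⟨t1, Finset.mem_filter.2 ⟨ht1, hPt1⟩⟩
  set t0 := Sf.max' hSfne with ht0def
  have ht0 : t0 ∈ Sf := Sf.max'_mem hSfne
  have ht0m : t0 < m := Finset.mem_range.1 (Finset.mem_filter.1 ht0).1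
  have ht0μ : P t0 = μ := (Finset.mem_filter.1 ht0).2
  refine ⟨t0, ht0m, ?_⟩
  intro j hj1 hjm
  have key : P t0 + 1 ≤ P (t0 + j) := by
    rcases Nat.lt_or_ge (t0 + j) m with h | h
    · have hmem : P (t0 + j) ∈ (Finset.range m).image P :=
        Finset.mem_image_of_mem P (Finset.mem_range.2 h)
      have h1 := Finset.min'_le _ _ hmem
      have hne : P (t0 + j) ≠ μ := by
        intro hEq
        have : t0 + j ∈ Sf := Finset.mem_filter.2 ⟨Finset.mem_range.2 h, hEq⟩
        have := Sf.le_max' _ this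
        omega
      omega
    · have hs : t0 + j - m < m := by omega
      have hmem : P (t0 + j - m) ∈ (Finset.range m).image P :=
        Finset.mem_image_of_mem P (Finset.mem_range.2 hs)
      have h1 := Finset.min'_le _ _ hmem
      have h2 := hper (t0 + j - m)
      rw [show t0 + j - m + m = t0 + j by omega] at h2
      omega
  simp only [hP] at key
  omega

lemma good_pair_false (m : ℕ) [NeZero m] (a : Fin (m+1) → ZMod m) {t t' : ℕ}
    (htt : t < t') (ht' : t' < m) (h : Good m a t) (h' : Good m a t') : False := by
  have h1 := h (t' - t) (by omega) (by omega)
  rw [show t + (t' - t) = t' by omega] at h1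
  have h2 := h' (t + m - t') (by omega) (by omega)
  rw [show t' + (t + m - t') = t + m by omega] at h2
  have h3 := Fc_period m a t
  omega

lemma good_unique (m : ℕ) [NeZero m] (a : Fin (m+1) → ZMod m) {t t' : ℕ}
    (ht : t < m) (ht' : t' < m) (h : Good m a t) (h' : Good m a t') : t = t' := by
  rcases Nat.lt_trichotomy t t' with hlt | hEq | hgt
  · exact absurd (good_pair_false m a hlt ht' h h') (fun f => f)
  · exact hEq
  · exact absurd (good_pair_false m a hgt ht h' h) (fun f => f)

lemma card_pcond (m : ℕ) [NeZero m] :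
    Fintype.card {b : Fin (m+1) → ZMod m // PCond m b} = m ^ m := by
  have hm : 0 < m := Nat.pos_of_ne_zero (NeZero.ne m)
  have hbij : Function.Bijective (fun p : {b : Fin (m+1) → ZMod m // PCond m b} × ZMod m =>
      (fun i => p.1.1 i + p.2 : Fin (m+1) → ZMod m)) := by
    constructor
    · rintro ⟨⟨b, hb⟩, c⟩ ⟨⟨b', hb'⟩, c'⟩ h
      simp only at h
      have hgood : ∀ (b0 : Fin (m+1) → ZMod m) (c0 : ZMod m), PCond m b0 →
          Good m (fun i => b0 i + c0) c0.val := by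
        intro b0 c0 hb0
        rw [← pcond_shift]
        have : (fun i => (fun i => b0 i + c0) i - ((c0.val : ℕ) : ZMod m)) = b0 := by
          funext i
          rw [ZMod.natCast_rightInverse c0]
          ring
        rw [this]
        exact hb0
      have hg : Good m (fun i => b i + c) c.val := hgood b c hb
      have hg' : Good m (fun i => b i + c) c'.val := by
        rw [h]; exact hgood b' c' hb'
      have hval : c.val = c'.val :=
        good_unique m _ (ZMod.val_lt c) (ZMod.val_lt c') hg hg'
      have hcc : c = c' := ZMod.val_injective (m) hval
      subst hcc
      have hbb : b = b' := by
        funext i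
        have := congrFun h i
        simpa using this
      simp [hbb]
    · intro a
      obtain ⟨t, ht, hg⟩ := exists_good m a
      refine ⟨⟨⟨fun i => a i - (t : ZMod m), (pcond_shift m a t).2 hg⟩, (t : ZMod m)⟩, ?_⟩
      funext i
      simp only
      ring
  have hcard := Fintype.card_congr (Equiv.ofBijective _ hbij)
  rw [Fintype.card_prod, ZMod.card, Fintype.card_fun, ZMod.card, Fintype.card_fin] at hcard
  have : Fintype.card {b : Fin (m+1) → ZMod m // PCond m b} * m = m ^ m * m := by
    rw [hcard, pow_succ]
  exact Nat.eq_of_mul_eq_mul_right hm this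


lemma card_filter_lt_fin (n : ℕ) (i : Fin n) :
    (univ.filter (fun k : Fin n => k < i)).card = (i : ℕ) := by
  have h : univ.filter (fun k : Fin n => k < i) = Finset.Iio i := by
    ext k; simp [Finset.mem_Iio]
  rw [h, Fin.card_Iio]

lemma parking_of (m : ℕ) (π : Fin (m+1) → ℕ) (h1 : ∀ i, 1 ≤ π i) (hbd : ∀ i, π i ≤ m)
    (hc : ∀ j, 1 ≤ j → j ≤ m → j + 1 ≤ (univ.filter (fun i => π i ≤ j)).card) :
    IsParkingFunction (m+1) π := by
  refine ⟨h1, Tuple.sort π, Tuple.monotone_sort π, ?_⟩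
  intro i
  by_cases him : (i : ℕ) + 1 ≤ m
  · have hcard : (univ.filter (fun k => π (Tuple.sort π k) ≤ (i : ℕ) + 1)).card
        = (univ.filter (fun k => π k ≤ (i : ℕ) + 1)).card := by
      rw [← Fintype.card_subtype, ← Fintype.card_subtype]
      exact Fintype.card_congr ((Tuple.sort π).subtypeEquiv (fun k => Iff.rfl))
    have hge := hc ((i : ℕ) + 1) (by omega) him
    by_contra hgt
    push_neg at hgt
    have hsub : (univ.filter (fun k => π (Tuple.sort π k) ≤ (i : ℕ) + 1))
        ⊆ univ.filter (fun k : Fin (m+1) => k < i) := by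
      intro k hk
      simp only [Finset.mem_filter, Finset.mem_univ, true_and] at hk ⊢
      by_contra hki
      push_neg at hki
      have hmono := Tuple.monotone_sort π hki
      simp only [Function.comp_apply] at hmono
      omega
    have hle := Finset.card_le_card hsub
    rw [card_filter_lt_fin] at hle
    omega
  · calc π (Tuple.sort π i) ≤ m := hbd _
      _ ≤ (i : ℕ) + 1 := by omega

lemma set_eq (m : ℕ) [NeZero m] :
    {π : Fin (m+1) → ℕ | IsPrimeParkingFunction (m+1) π}
      = (fun b : Fin (m+1) → ZMod m => (fun i => (b i).val + 1)) '' {b | PCond m b} := by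
  have hm : 0 < m := Nat.pos_of_ne_zero (NeZero.ne m)
  ext π
  simp only [Set.mem_setOf_eq, Set.mem_image]
  constructor
  · rintro ⟨⟨h1, -⟩, hpr⟩
    have hc : ∀ j, 1 ≤ j → j ≤ m → j + 1 ≤ (univ.filter (fun i => π i ≤ j)).card := by
      intro j hj1 hjm
      exact hpr j hj1 (by simpa using hjm)
    have hbd : ∀ i, π i ≤ m := by
      intro i
      have h := hc m hm le_rfl
      have hE : univ.filter (fun i => π i ≤ m) = (univ : Finset (Fin (m+1))) := by
        apply Finset.eq_univ_of_card
        have hle := Finset.card_le_univ (univ.filter (fun i => π i ≤ m))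
        simp only [Finset.card_univ, Fintype.card_fin] at hle ⊢
        omega
      have : i ∈ univ.filter (fun i => π i ≤ m) := by rw [hE]; exact Finset.mem_univ i
      exact (Finset.mem_filter.1 this).2
    refine ⟨fun i => ((π i - 1 : ℕ) : ZMod m), ?_, ?_⟩
    · intro j hj1 hjm
      have hval : ∀ i, ((π i - 1 : ℕ) : ZMod m).val = π i - 1 := by
        intro i
        rw [ZMod.val_natCast, Nat.mod_eq_of_lt (by have := h1 i; have := hbd i; omega)]
      have hfe : univ.filter (fun i => ((π i - 1 : ℕ) : ZMod m).val + 1 ≤ j)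
          = univ.filter (fun i => π i ≤ j) := by
        apply Finset.filter_congr
        intro i _
        rw [hval i]
        have := h1 i
        constructor <;> intro <;> omega
      rw [hfe]
      exact hc j hj1 hjm
    · funext i
      rw [ZMod.val_natCast, Nat.mod_eq_of_lt (by have := h1 i; have := hbd i; omega)]
      have := h1 i
      omega
  · rintro ⟨b, hb, rfl⟩
    have h1 : ∀ i, 1 ≤ (b i).val + 1 := fun i => by omega
    have hbd : ∀ i, (b i).val + 1 ≤ m := fun i => by have := ZMod.val_lt (b i); omega
    refine ⟨parking_of m _ h1 hbd (fun j hj1 hjm => hb j hj1 hjm), ?_⟩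
    intro j hj1 hjm
    exact hb j hj1 (by simpa using hjm)

end PPFAux
/-- The number of prime parking functions of length `n` is `(n-1)^(n-1)`. -/
theorem card_primeParkingFunctions (n : ℕ) (hn : 1 ≤ n) :
    Set.ncard {π : Fin n → ℕ | IsPrimeParkingFunction n π} = (n - 1) ^ (n - 1) := by
  classical
  obtain ⟨m, rfl⟩ : ∃ m, n = m + 1 := ⟨n - 1, by omega⟩
  simp only [Nat.add_sub_cancel]
  rcases Nat.eq_zero_or_pos m with rfl | hm
  · have hset : {π : Fin 1 → ℕ | IsPrimeParkingFunction 1 π} = {fun _ => 1} := by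
      ext π
      simp only [Set.mem_setOf_eq, Set.mem_singleton_iff]
      constructor
      · rintro ⟨⟨h1, σ, hmono, hle⟩, -⟩
        funext i
        have h2 := hle (σ.symm i)
        rw [Equiv.apply_symm_apply] at h2
        have h3 := h1 i
        have h4 : ((σ.symm i : Fin 1) : ℕ) = 0 := by omega
        omega
      · rintro rfl
        refine ⟨⟨fun _ => le_rfl, Equiv.refl _, fun a b _ => le_rfl, fun i => ?_⟩, ?_⟩
        · simp
        · intro j hj1 hj0
          omega
    rw [hset, Set.ncard_singleton, pow_zero]
  · haveI : NeZero m := ⟨hm.ne'⟩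
    rw [PPFAux.set_eq m]
    have hinj : Function.Injective
        (fun b : Fin (m+1) → ZMod m => (fun i => (b i).val + 1 : Fin (m+1) → ℕ)) := by
      intro b b' h
      funext i
      have := congrFun h i
      simp only at this
      exact ZMod.val_injective m (by omega)
    rw [Set.ncard_image_of_injective _ hinj]
    have h1 : {b : Fin (m+1) → ZMod m | PPFAux.PCond m b}.ncard
        = Fintype.card {b : Fin (m+1) → ZMod m // PPFAux.PCond m b} := by
      rw [← Nat.card_coe_set_eq, Nat.card_eq_fintype_card]
      exact Fintype.card_congr (Equiv.subtypeEquivRight (fun b => Iff.rfl))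
    rw [h1, PPFAux.card_pcond m]
end
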